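/- Let ψ_s : M → M be a family of bijections of a manifold M and ψ : M_0 → M the locally-stable limit on an open set M_0 ⊂ M. Suppose: (a) for each compact L ⊂ M there exists σ_L with ψ_σ|_{ψ_{σ_L}^{-1}(L)} = ψ_{σ'}|_{ψ_{σ_L}^{-1}(L)} for all σ,σ' ≥ σ_L; (b) the set N = M \ M_0 satisfies ψ_{σ_L}^{-1}(L) ∩ N' ⊂ M_0 for a suitable subset N' with N ⊂ N' and ψ(M_0 ∩ N') ⊃ N'. Then ψ : M_0 → M is surjective. -/
import Mathlib


open Set

/-- Let `ψ s` be bijections of `M` stabilizing locally on the open set `M₀` with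
locally-stable limit `F`.  If (a) the family stabilizes on preimages of compacta and
(b) there is `N' ⊇ M \ M₀` with `N' ⊆ F '' (M₀ ∩ N')` such that the stabilized
preimages of compacta meet `N'` only inside `M₀`, then `F : M₀ → M` is
surjective. -/
theorem stmt12 {M : Type*} [TopologicalSpace M] [T2Space M] [LocallyCompactSpace M]
    [SigmaCompactSpace M]
    (ψ : ℝ → M → M) (hbij : ∀ s, Function.Bijective (ψ s))
    (M₀ : Set M) (hM₀ : IsOpen M₀)
    (F : M → M)
    (hF : ∀ K : Set M, K ⊆ M₀ → IsCompact K →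
      ∃ sK : ℝ, ∀ s ≥ sK, EqOn F (ψ s) K)
    (N' : Set M) (hN'₁ : univ \ M₀ ⊆ N') (hN'₂ : N' ⊆ F '' (M₀ ∩ N'))
    (hstabpre : ∀ L : Set M, IsCompact L → ∃ σL : ℝ,
      (∀ σ ≥ σL, ∀ σ' ≥ σL, EqOn (ψ σ) (ψ σ') (ψ σL ⁻¹' L)) ∧
      (ψ σL ⁻¹' L) ∩ N' ⊆ M₀) :
    SurjOn F M₀ univ := by
  intro m _
  obtain ⟨σL, hstab, hN⟩ := hstabpre {m} isCompact_singleton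
  obtain ⟨x, hx⟩ := (hbij σL).2 m
  have hxpre : x ∈ ψ σL ⁻¹' {m} := by simp [hx]
  have hxM₀ : x ∈ M₀ := by
    by_cases hxN : x ∈ N'
    · exact hN ⟨hxpre, hxN⟩
    · by_contra h; exact hxN (hN'₁ ⟨trivial, h⟩)
  obtain ⟨sK, hsK⟩ := hF {x} (singleton_subset_iff.2 hxM₀) isCompact_singleton
  refine ⟨x, hxM₀, ?_⟩
  have h1 : F x = ψ (max sK σL) x := hsK _ (le_max_left _ _) rfl
  have h2 : ψ (max sK σL) x = ψ σL x := hstab _ (le_max_right _ _) _ le_rfl hxpre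
  rw [h1, h2, hx]
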